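/- Fix an integer k ≥ 1 and c > 40, let p = c/n, and let H be an (n,k,p) Newman–Watts small world. Then for all n sufficiently large, P(there exists S ⊆ [n] with |S| > 9n/10 and e(S) ≤ |E(H)|) ≤ (2/e)^n. -/

import Mathlib

open scoped Classical

noncomputable section

/-- The `(n,k)`-ring adjacency on `Fin n` (with mod-`n` arithmetic):
`x` and `y` are adjacent iff `(y-x) mod n ∈ {1,…,k}` (equivalently, in `{-k,…,-1}`). -/
def ringAdj (n k : ℕ) (x y : Fin n) : Prop :=
  x ≠ y ∧ ((y - x).val ≤ k ∨ (x - y).val ≤ k)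

/-- The Newman–Watts small world determined by the Bernoulli coordinates `η`:
the `(n,k)`-ring together with all pairs `{x,y}` with `η s(x,y) = true`. -/
def nwGraph (n k : ℕ) (η : Sym2 (Fin n) → Bool) : SimpleGraph (Fin n) where
  Adj x y := x ≠ y ∧ ((y - x).val ≤ k ∨ (x - y).val ≤ k ∨ η s(x, y) = true)
  symm := by
    constructor
    rintro x y ⟨hne, h⟩
    refine ⟨hne.symm, ?_⟩
    rcases h with h | h | h
    · exact Or.inr (Or.inl h)
    · exact Or.inl h
    · exact Or.inr (Or.inr (by rwa [Sym2.eq_swap]))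
  loopless := by constructor; rintro x ⟨hne, -⟩; exact hne rfl

/-- Product-Bernoulli(`p`) weight of an outcome `η`. -/
def nwWeight (n : ℕ) (p : ℝ) (η : Sym2 (Fin n) → Bool) : ℝ :=
  ∏ e : Sym2 (Fin n), if η e then p else 1 - p

/-- Probability of an event under the product Bernoulli(`p`) measure. -/
def nwPr (n : ℕ) (p : ℝ) (A : (Sym2 (Fin n) → Bool) → Prop) : ℝ :=
  ∑ η : Sym2 (Fin n) → Bool, if A η then nwWeight n p η else 0

/-- Expectation under the product Bernoulli(`p`) measure. -/
def nwExp (n : ℕ) (p : ℝ) (X : (Sym2 (Fin n) → Bool) → ℝ) : ℝ :=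
  ∑ η : Sym2 (Fin n) → Bool, nwWeight n p η * X η

variable {V : Type*} [Fintype V] [DecidableEq V]

/-- Degree of `v` in `G`. -/
def gdeg (G : SimpleGraph V) (v : V) : ℕ :=
  (Finset.univ.filter fun u => G.Adj v u).card

/-- Number of edges of `G`. -/
def edgeCount (G : SimpleGraph V) : ℕ := (∑ v, gdeg G v) / 2

/-- `e(S,Sᶜ)`: number of edges with one endpoint in `S`, the other outside. -/
def eCross (G : SimpleGraph V) (S : Finset V) : ℕ :=
  ∑ x ∈ S, ∑ y ∈ Sᶜ, if G.Adj x y then 1 else 0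

/-- `e(S) = Σ_{v∈S} deg v`. -/
def eTot (G : SimpleGraph V) (S : Finset V) : ℕ := ∑ x ∈ S, gdeg G x

/-- `e(S,S)`: number of edges with both endpoints in `S`. -/
def eIn (G : SimpleGraph V) (S : Finset V) : ℕ :=
  (∑ x ∈ S, ∑ y ∈ S, if G.Adj x y then 1 else 0) / 2

/-- `S` is connected if the induced subgraph `G[S]` is connected. -/
def connectedSet (G : SimpleGraph V) (S : Finset V) : Prop :=
  (G.induce (S : Set V)).Connected

/-- One step of the lazy simple random walk applied to a distribution. -/
def lazyStep (G : SimpleGraph V) (μ : V → ℝ) : V → ℝ := fun v =>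
  μ v / 2 + ∑ u ∈ Finset.univ.filter (fun u => G.Adj u v), μ u / (2 * gdeg G u)

/-- Distribution of the lazy simple random walk after `t` steps, started at `x`. -/
def walkDist (G : SimpleGraph V) (x : V) : ℕ → V → ℝ
  | 0 => fun v => if v = x then 1 else 0
  | (t + 1) => lazyStep G (walkDist G x t)

/-- Stationary distribution `π(v) = deg v / (2|E|)`. -/
def statDist (G : SimpleGraph V) (v : V) : ℝ := gdeg G v / (2 * edgeCount G)

/-- Total variation distance. -/
def tvDist (μ ν : V → ℝ) : ℝ := (∑ v, |μ v - ν v|) / 2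

/-- Mixing time `max_x min {t : ‖μ_{t,x} − π‖_TV ≤ 1/4}`. -/
def mixingTime (G : SimpleGraph V) : ℕ :=
  Finset.univ.sup fun x => sInf {t : ℕ | tvDist (walkDist G x t) (statDist G) ≤ 1 / 4}


/-!
Fix `S` with `|S| > 9n/10` and let `T = Sᶜ`. As `e(S) + e(T) = 2|E(H)|` and the crossing edges
are counted once on each side, `e(S) ≤ |E(H)|` forces `H` to have no more edges inside `S` than
inside `T`. The ring is regular and `|T| ≤ |S|`, so it has at least as many edges inside `S` as
inside `T`; hence the number `B` of random non-ring edges inside `S` is at most the number `A` of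
random pairs inside `T`. There are only `O(|T|²)` pairs inside `T` against `Ω(n²)` non-ring pairs
inside `S`, and the exponential moment `E[2^(A - B)]` bounds the probability of `B ≤ A` by `e^(-n)`.
A union bound over the `2^n` sets `S` gives `(2/e)^n`.
-/

open Finset

section Counting

variable {α : Type*} (G : SimpleGraph α) [DecidableRel G.Adj]

lemma card_interedges_eq_sum (s t : Finset α) :
    #(G.interedges s t) = ∑ x ∈ s, #{y ∈ t | G.Adj x y} := by
  simp only [SimpleGraph.interedges_def, card_filter, sum_product]

lemma card_interedges_sup_of_disjoint {G H : SimpleGraph α} [DecidableRel G.Adj]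
    [DecidableRel H.Adj] (h : Disjoint G H) (s t : Finset α) :
    #((G ⊔ H).interedges s t) = #(G.interedges s t) + #(H.interedges s t) := by
  rw [card_interedges_eq_sum, card_interedges_eq_sum, card_interedges_eq_sum, ← sum_add_distrib]
  refine sum_congr rfl fun x _ => ?_
  simp only [SimpleGraph.sup_adj, filter_or]
  exact card_union_of_disjoint (disjoint_filter.2 fun y _ hG hH => h.le_bot ⟨hG, hH⟩)

lemma SimpleGraph.card_interedges_comm (s t : Finset α) :
    #(G.interedges s t) = #(G.interedges t s) :=
  have := G.symm
  Rel.card_interedges_comm s t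

variable [DecidableEq α]

lemma two_mul_card_sym2_filter_mem_edgeSet (s : Finset α) :
    2 * #{e ∈ s.sym2 | e ∈ G.edgeSet} = #(G.interedges s s) := by
  have himage : (G.interedges s s).image Sym2.mk.uncurry = {e ∈ s.sym2 | e ∈ G.edgeSet} := by
    ext e; induction e using Sym2.ind
    simp only [mem_image, SimpleGraph.mem_interedges_iff, Prod.exists, Function.uncurry_apply_pair,
      Sym2.eq_iff, mem_filter, mk_mem_sym2_iff, SimpleGraph.mem_edgeSet]
    aesop (add safe SimpleGraph.Adj.symm)
  rw [← himage, card_eq_sum_card_image (Sym2.mk.uncurry : α × α → _) (G.interedges s s),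
    sum_const_nat (Sym2.ind _), mul_comm]
  intro a b hab
  rw [himage, mem_filter, mk_mem_sym2_iff, SimpleGraph.mem_edgeSet] at hab
  have hfiber : {z ∈ G.interedges s s | Sym2.mk.uncurry z = s(a, b)} = {(a, b), (b, a)} := by
    ext ⟨x, y⟩
    simp only [mem_filter, SimpleGraph.mem_interedges_iff, Function.uncurry_apply_pair,
      Sym2.eq_iff, mem_insert, mem_singleton, Prod.mk.injEq]
    aesop (add safe SimpleGraph.Adj.symm)
  rw [hfiber, card_pair fun h => hab.2.ne (Prod.ext_iff.1 h).1]

variable [Fintype α]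

lemma sum_gdeg_eq_card_interedges (s : Finset α) :
    ∑ x ∈ s, gdeg G x = #(G.interedges s s) + #(G.interedges s sᶜ) := by
  simp only [card_interedges_eq_sum, ← sum_add_distrib, gdeg]
  refine sum_congr rfl fun x _ => ?_
  rw [← card_union_of_disjoint (disjoint_filter_filter disjoint_compl_right), ← filter_union,
    union_compl]
  congr

end Counting

section Comparison

variable {α : Type*} [Fintype α] [DecidableEq α]

lemma card_interedges_le_compl_of_eTot_le (G : SimpleGraph α) [DecidableRel G.Adj] {s : Finset α}
    (h : eTot G s ≤ edgeCount G) : #(G.interedges s s) ≤ #(G.interedges sᶜ sᶜ) := by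
  -- `2 e(s) ≤ e(s) + e(sᶜ)`, and the crossing pairs are counted once on each side.
  have hsum := sum_add_sum_compl s (gdeg G)
  have hs := sum_gdeg_eq_card_interedges G s
  have hsc := sum_gdeg_eq_card_interedges G sᶜ
  rw [compl_compl] at hsc
  have := G.card_interedges_comm s sᶜ
  rw [eTot, edgeCount] at h
  omega

lemma card_interedges_compl_le_of_regular (G : SimpleGraph α) [DecidableRel G.Adj] {d : ℕ}
    (hreg : ∀ x, gdeg G x = d) {s : Finset α} (hs : #sᶜ ≤ #s) :
    #(G.interedges sᶜ sᶜ) ≤ #(G.interedges s s) := by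
  have h := sum_gdeg_eq_card_interedges G s
  have hc := sum_gdeg_eq_card_interedges G sᶜ
  rw [compl_compl] at hc
  simp only [hreg, sum_const, smul_eq_mul] at h hc
  have := G.card_interedges_comm s sᶜ
  have := Nat.mul_le_mul_right d hs
  omega

lemma card_interedges_le_compl_of_sup_regular {R L : SimpleGraph α} [DecidableRel R.Adj]
    [DecidableRel L.Adj] (hRL : Disjoint R L) {d : ℕ} (hreg : ∀ x, gdeg R x = d) {s : Finset α}
    (hs : #sᶜ ≤ #s) (h : eTot (R ⊔ L) s ≤ edgeCount (R ⊔ L)) :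
    #(L.interedges s s) ≤ #(L.interedges sᶜ sᶜ) := by
  have := card_interedges_le_compl_of_eTot_le _ h
  rw [card_interedges_sup_of_disjoint hRL, card_interedges_sup_of_disjoint hRL] at this
  have := card_interedges_compl_le_of_regular R hreg hs
  omega

lemma card_mul_self_le_two_mul_card_compl_edges (G : SimpleGraph α) [DecidableRel G.Adj] {d : ℕ}
    (hdeg : ∀ x, gdeg G x ≤ d) (s : Finset α) :
    #s * #s ≤ 2 * #{e ∈ s.sym2 | e ∈ Gᶜ.edgeSet} + (d + 1) * #s := by
  have hoff : (G ⊔ Gᶜ).interedges s s = s.offDiag := by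
    ext ⟨x, y⟩
    simp only [SimpleGraph.mem_interedges_iff, SimpleGraph.sup_adj, SimpleGraph.compl_adj,
      mem_offDiag]
    have := G.ne_of_adj (a := x) (b := y)
    tauto
  have hsplit := card_interedges_sup_of_disjoint (disjoint_compl_right : Disjoint G Gᶜ) s s
  rw [hoff, offDiag_card] at hsplit
  have hG : #(G.interedges s s) ≤ d * #s := by
    have hsum : ∑ x ∈ s, gdeg G x ≤ d * #s := by
      simpa [mul_comm] using sum_le_card_nsmul s (gdeg G) d fun x _ => hdeg x
    have := sum_gdeg_eq_card_interedges G s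
    omega
  have := two_mul_card_sym2_filter_mem_edgeSet Gᶜ s
  have : #s ≤ #s * #s := Nat.le_mul_self _
  rw [add_mul]
  omega

end Comparison

section Ring

variable {n k : ℕ}

-- `fromRel` symmetrizes, so the adjacency relation is exactly `ringAdj n k`.
def ringGraph (n k : ℕ) : SimpleGraph (Fin n) :=
  SimpleGraph.fromRel fun x y => (y - x).val ≤ k

def longRangeGraph (n k : ℕ) (η : Sym2 (Fin n) → Bool) : SimpleGraph (Fin n) :=
  SimpleGraph.fromEdgeSet {e | η e} \ ringGraph n k

lemma nwGraph_eq_sup (η : Sym2 (Fin n) → Bool) :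
    nwGraph n k η = ringGraph n k ⊔ longRangeGraph n k η := by
  ext x y
  simp only [nwGraph, ringGraph, longRangeGraph, sup_sdiff_self, SimpleGraph.sup_adj,
    SimpleGraph.fromRel_adj, SimpleGraph.fromEdgeSet_adj, Set.mem_ofPred_eq]
  tauto

lemma mem_edgeSet_longRangeGraph {η : Sym2 (Fin n) → Bool} {e : Sym2 (Fin n)} :
    e ∈ (longRangeGraph n k η).edgeSet ↔ e ∈ (ringGraph n k)ᶜ.edgeSet ∧ η e := by
  induction e using Sym2.ind
  simp only [longRangeGraph, SimpleGraph.edgeSet_sdiff, SimpleGraph.edgeSet_fromEdgeSet,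
    Set.mem_sdiff, Set.mem_ofPred_eq, Sym2.mem_diagSet, Sym2.mk_isDiag_iff, SimpleGraph.mem_edgeSet,
    SimpleGraph.compl_adj]
  tauto

variable [NeZero n]

-- Adjacency depends only on `y - x`, so translation by `x` is an automorphism.
lemma gdeg_ringGraph (x : Fin n) : gdeg (ringGraph n k) x = gdeg (ringGraph n k) 0 :=
  card_equiv (Equiv.subRight x) fun y => by
    simp [ringGraph, sub_eq_zero, eq_comm]

lemma card_filter_ne_zero_val_le {f : Fin n → Fin n} (hf : Function.Injective f) (hf0 : f 0 = 0) :
    #{y | y ≠ 0 ∧ (f y).val ≤ k} ≤ k := by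
  refine (card_le_card_of_injOn (fun y => (f y).val) (t := Icc 1 k) ?_ ?_).trans (by simp)
  · intro y hy
    simp only [coe_filter, mem_univ, true_and, Set.mem_ofPred_eq, coe_Icc, Set.mem_Icc] at hy ⊢
    have : f y ≠ 0 := fun h => hy.1 (hf (h.trans hf0.symm))
    exact ⟨Nat.one_le_iff_ne_zero.2 (Fin.val_ne_zero_iff.2 this), hy.2⟩
  · exact fun y _ z _ h => hf (Fin.ext h)

lemma gdeg_ringGraph_le (x : Fin n) : gdeg (ringGraph n k) x ≤ 2 * k := by
  rw [gdeg_ringGraph, gdeg, two_mul]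
  refine (card_le_card fun y hy => ?_).trans ((card_union_le _ _).trans (add_le_add
    (card_filter_ne_zero_val_le (f := id) Function.injective_id rfl)
    (card_filter_ne_zero_val_le neg_injective neg_zero)))
  simp only [ringGraph, SimpleGraph.fromRel_adj, sub_zero, zero_sub, mem_filter, mem_univ,
    true_and] at hy
  simp only [id_eq, mem_union, mem_filter, mem_univ, true_and]
  tauto

lemma card_filter_sym2_le_of_eTot_le {η : Sym2 (Fin n) → Bool} {S : Finset (Fin n)}
    (hS : #Sᶜ ≤ #S) (h : eTot (nwGraph n k η) S ≤ edgeCount (nwGraph n k η)) :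
    #{e ∈ {e ∈ S.sym2 | e ∈ (ringGraph n k)ᶜ.edgeSet} | η e} ≤ #{e ∈ Sᶜ.sym2 | η e} := by
  rw [nwGraph_eq_sup] at h
  have hcmp := card_interedges_le_compl_of_sup_regular (L := longRangeGraph n k η)
    disjoint_sdiff_self_right gdeg_ringGraph hS h
  rw [← two_mul_card_sym2_filter_mem_edgeSet, ← two_mul_card_sym2_filter_mem_edgeSet] at hcmp
  have hS' : {e ∈ {e ∈ S.sym2 | e ∈ (ringGraph n k)ᶜ.edgeSet} | η e} =
      {e ∈ S.sym2 | e ∈ (longRangeGraph n k η).edgeSet} := by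
    rw [filter_filter]
    simp only [mem_edgeSet_longRangeGraph]
  have hT : #{e ∈ Sᶜ.sym2 | e ∈ (longRangeGraph n k η).edgeSet} ≤ #{e ∈ Sᶜ.sym2 | η e} :=
    card_le_card (monotone_filter_right _ fun _ _ he => (mem_edgeSet_longRangeGraph.1 he).2)
  rw [hS']
  omega

end Ring

section Bernoulli

variable {n : ℕ} {p : ℝ}

lemma nwWeight_nonneg (hp0 : 0 ≤ p) (hp1 : p ≤ 1) (η : Sym2 (Fin n) → Bool) :
    0 ≤ nwWeight n p η :=
  prod_nonneg fun e _ => by split_ifs <;> linarith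

lemma nwPr_mono (hp0 : 0 ≤ p) (hp1 : p ≤ 1) {A B : (Sym2 (Fin n) → Bool) → Prop}
    (h : ∀ η, A η → B η) : nwPr n p A ≤ nwPr n p B :=
  sum_le_sum fun η _ => by
    by_cases hA : A η
    · rw [if_pos hA, if_pos (h η hA)]
    · rw [if_neg hA]
      exact ite_nonneg (nwWeight_nonneg hp0 hp1 η) le_rfl

lemma nwPr_exists_le_sum {ι : Type*} [Fintype ι] (hp0 : 0 ≤ p) (hp1 : p ≤ 1)
    (A : ι → (Sym2 (Fin n) → Bool) → Prop) :
    nwPr n p (fun η => ∃ i, A i η) ≤ ∑ i, nwPr n p (A i) := by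
  unfold nwPr
  rw [sum_comm]
  refine sum_le_sum fun η _ => ?_
  have hnonneg : ∀ i ∈ univ, 0 ≤ if A i η then nwWeight n p η else 0 :=
    fun i _ => ite_nonneg (nwWeight_nonneg hp0 hp1 η) le_rfl
  split_ifs with h
  · obtain ⟨i, hi⟩ := h
    exact (if_pos hi).symm.le.trans (single_le_sum hnonneg (mem_univ i))
  · exact sum_nonneg hnonneg

lemma nwPr_le_nwExp (hp0 : 0 ≤ p) (hp1 : p ≤ 1) {A : (Sym2 (Fin n) → Bool) → Prop}
    {X : (Sym2 (Fin n) → Bool) → ℝ} (hX0 : ∀ η, 0 ≤ X η) (hX : ∀ η, A η → 1 ≤ X η) :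
    nwPr n p A ≤ nwExp n p X :=
  sum_le_sum fun η _ => by
    split_ifs with hA
    · exact le_mul_of_one_le_right (nwWeight_nonneg hp0 hp1 η) (hX η hA)
    · exact mul_nonneg (nwWeight_nonneg hp0 hp1 η) (hX0 η)

lemma nwExp_prod (f : Sym2 (Fin n) → Bool → ℝ) :
    nwExp n p (fun η => ∏ e, f e (η e)) = ∏ e, ((1 - p) * f e false + p * f e true) := by
  simp only [nwExp, nwWeight, ← prod_mul_distrib]
  rw [← Fintype.prod_sum (fun e (b : Bool) => (if b then p else 1 - p) * f e b)]
  simp [add_comm]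

lemma nwPr_sum_nonneg_le_exp (hp0 : 0 ≤ p) (hp1 : p ≤ 1) (w : Sym2 (Fin n) → ℝ) :
    nwPr n p (fun η => 0 ≤ ∑ e, if η e then w e else 0) ≤
      Real.exp (p * ∑ e, (Real.exp (w e) - 1)) := by
  calc nwPr n p (fun η => 0 ≤ ∑ e, if η e then w e else 0)
      ≤ nwExp n p (fun η => ∏ e, Real.exp (if η e then w e else 0)) :=
        nwPr_le_nwExp hp0 hp1 (fun η => by positivity) fun η h => by
          rw [← Real.exp_sum]; exact Real.one_le_exp h
    _ = ∏ e, ((1 - p) + p * Real.exp (w e)) := by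
        rw [nwExp_prod (fun e b => Real.exp (if b then w e else 0))]
        simp
    _ ≤ ∏ e, Real.exp (p * (Real.exp (w e) - 1)) := by
        refine prod_le_prod (fun e _ => by nlinarith [Real.exp_pos (w e)]) fun e _ => ?_
        linarith [Real.add_one_le_exp (p * (Real.exp (w e) - 1))]
    _ = Real.exp (p * ∑ e, (Real.exp (w e) - 1)) := by rw [← Real.exp_sum, mul_sum]

lemma nwPr_card_filter_le_le_exp (hp0 : 0 ≤ p) (hp1 : p ≤ 1) (A B : Finset (Sym2 (Fin n))) :
    nwPr n p (fun η => #{e ∈ B | η e} ≤ #{e ∈ A | η e}) ≤ Real.exp (p * (#A - #B / 2)) := by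
  set w : Sym2 (Fin n) → ℝ :=
    fun e => Real.log 2 * ((if e ∈ A then 1 else 0) - (if e ∈ B then 1 else 0)) with hw
  have hsum : ∀ η : Sym2 (Fin n) → Bool, ∑ e, (if η e then w e else 0) =
      Real.log 2 * (#{e ∈ A | η e} - #{e ∈ B | η e}) := by
    intro η
    simp only [hw, ← sum_filter, mul_sub, sum_sub_distrib, ← mul_sum, sum_const, nsmul_one]
    rw [filter_comm, filter_univ_mem, filter_comm, filter_univ_mem]
  have hexp : ∀ e, Real.exp (w e) - 1 ≤
      (if e ∈ A then 1 else 0) - (if e ∈ B then 1 / 2 else 0) := by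
    intro e
    simp only [hw]
    -- `exp (w e)` is `2` on `A \ B`, `1 / 2` on `B \ A` and `1` elsewhere.
    split_ifs <;> norm_num [Real.exp_neg, Real.exp_log]
  refine (nwPr_mono hp0 hp1 fun η h => ?_).trans ((nwPr_sum_nonneg_le_exp hp0 hp1 w).trans ?_)
  · rw [hsum]
    have : (#{e ∈ B | η e} : ℝ) ≤ #{e ∈ A | η e} := by exact_mod_cast h
    exact mul_nonneg (Real.log_nonneg one_le_two) (sub_nonneg.2 this)
  · refine Real.exp_le_exp.2 (mul_le_mul_of_nonneg_left
      ((sum_le_sum fun e _ => hexp e).trans_eq ?_) hp0)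
    simp [sum_sub_distrib, div_eq_mul_inv]

end Bernoulli

lemma exponent_le_neg_of_large_set {c n k s t a b : ℝ} (hc : 8 ≤ c) (hn : 10 * (k + 1) ≤ n)
    (hs : 0 ≤ s) (ht0 : 0 ≤ t) (hst : s + t = n) (ht : 10 * t < n) (ha : 2 * a ≤ t * (t + 1))
    (hb : s * s ≤ 2 * b + (2 * k + 1) * s) : c / n * (a - b / 2) ≤ -n := by
  have hn0 : 0 < n := by linarith
  have hX : 4 * a - 2 * b ≤ -(n * n / 2) := by nlinarith [mul_le_mul_of_nonneg_left hn hs]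
  rw [div_mul_eq_mul_div, div_le_iff₀ hn0]
  nlinarith

lemma nwPr_eTot_le_edgeCount_le_exp {n k : ℕ} {c : ℝ} (hc : 8 ≤ c) (hn : 10 * (k + 1) ≤ n)
    (hcn : c ≤ n) {S : Finset (Fin n)} (hS : 9 * (n : ℝ) / 10 < #S) :
    nwPr n (c / n) (fun η => eTot (nwGraph n k η) S ≤ edgeCount (nwGraph n k η)) ≤
      Real.exp (-n) := by
  have : NeZero n := ⟨by omega⟩
  have hn0 : (0 : ℝ) < n := by exact_mod_cast Nat.pos_of_neZero n
  have hp0 : 0 ≤ c / n := div_nonneg (by linarith) hn0.le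
  have hp1 : c / n ≤ 1 := (div_le_one hn0).2 hcn
  have hcard : #S + #Sᶜ = n := by rw [card_add_card_compl, Fintype.card_fin]
  have ht : 10 * #Sᶜ < n := by
    have : (#S + #Sᶜ : ℝ) = n := by exact_mod_cast hcard
    exact_mod_cast (by linarith : (10 * #Sᶜ : ℝ) < n)
  have ha : 2 * #Sᶜ.sym2 ≤ #Sᶜ * (#Sᶜ + 1) := by
    rw [card_sym2, Nat.choose_two_right, Nat.add_sub_cancel, mul_comm (#Sᶜ + 1)]
    exact Nat.mul_div_le _ _
  have hb := card_mul_self_le_two_mul_card_compl_edges (ringGraph n k) gdeg_ringGraph_le S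
  calc nwPr n (c / n) (fun η => eTot (nwGraph n k η) S ≤ edgeCount (nwGraph n k η))
      ≤ nwPr n (c / n) (fun η => #{e ∈ {e ∈ S.sym2 | e ∈ (ringGraph n k)ᶜ.edgeSet} | η e} ≤
          #{e ∈ Sᶜ.sym2 | η e}) :=
        nwPr_mono hp0 hp1 fun η => card_filter_sym2_le_of_eTot_le (by omega)
    _ ≤ _ := nwPr_card_filter_le_le_exp hp0 hp1 _ _
    _ ≤ Real.exp (-n) := Real.exp_le_exp.2 <|
        exponent_le_neg_of_large_set (k := k) hc (by exact_mod_cast hn)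
          (Nat.cast_nonneg _) (Nat.cast_nonneg _) (by exact_mod_cast hcard) (by exact_mod_cast ht)
          (by exact_mod_cast ha) (by exact_mod_cast hb)

theorem expansion_of_very_large_sets_general (k : ℕ) (c : ℝ) (hc : 40 < c) :
    ∃ N : ℕ, ∀ n : ℕ, N ≤ n →
      nwPr n (c / n) (fun η => ∃ S : Finset (Fin n),
        9 * (n : ℝ) / 10 < S.card ∧
        eTot (nwGraph n k η) S ≤ edgeCount (nwGraph n k η)) ≤
      (2 / Real.exp 1) ^ n := by
  refine ⟨10 * (k + 1) + ⌈c⌉₊, fun n hn => ?_⟩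
  have hcn : c ≤ n := (Nat.le_ceil c).trans (by exact_mod_cast (Nat.le_add_left _ _).trans hn)
  have hn0 : (0 : ℝ) < n := by linarith
  have hp0 : 0 ≤ c / n := div_nonneg (by linarith) hn0.le
  have hp1 : c / n ≤ 1 := (div_le_one hn0).2 hcn
  calc _ ≤ ∑ S : Finset (Fin n), nwPr n (c / n) (fun η => 9 * (n : ℝ) / 10 < S.card ∧
          eTot (nwGraph n k η) S ≤ edgeCount (nwGraph n k η)) :=
        nwPr_exists_le_sum hp0 hp1 _
    _ ≤ ∑ _S : Finset (Fin n), Real.exp (-n) := sum_le_sum fun S _ => by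
        by_cases hS : 9 * (n : ℝ) / 10 < S.card
        · exact (nwPr_mono hp0 hp1 fun η h => h.2).trans
            (nwPr_eTot_le_edgeCount_le_exp (by linarith) (by omega) hcn hS)
        · exact (sum_eq_zero fun η _ => if_neg fun h => hS h.1).le.trans (Real.exp_pos _).le
    _ = (2 / Real.exp 1) ^ n := by
        rw [sum_const, card_univ, Fintype.card_finset, Fintype.card_fin, nsmul_eq_mul, div_pow,
          Real.exp_one_pow, Real.exp_neg, div_eq_mul_inv]
        push_cast
        rfl

/-- **Lemma (expansion of very large sets, `c > 40`).** Fix `k ≥ 1` and `c > 40`, let `p = c/n`,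
and let `H` be an `(n,k,p)` Newman–Watts small world. Then for all `n` sufficiently large, the
probability that some `S ⊆ [n]` with `|S| > 9n/10` has `e(S) ≤ |E(H)|` is at most `(2/e)^n`. -/
theorem expansion_of_very_large_sets (k : ℕ) (hk : 1 ≤ k) (c : ℝ) (hc : 40 < c) :
    ∃ N : ℕ, ∀ n : ℕ, N ≤ n →
      nwPr n (c / n) (fun η => ∃ S : Finset (Fin n),
        9 * (n : ℝ) / 10 < S.card ∧
        eTot (nwGraph n k η) S ≤ edgeCount (nwGraph n k η)) ≤
      (2 / Real.exp 1) ^ n :=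
  expansion_of_very_large_sets_general k c hc
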